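/- Let T ∩ 3^ω := { α ∈ 3^ω : every finite prefix of α contains at most as many 2s as 1s }, and let e : T ∩ 3^ω → 2^ω be defined by e(α) := lim_n (α↾n)^↩, where ↩ is the erasing operation (∅^↩ := ∅; (tε)^↩ := t^↩ε for ε ∈ {0,1}; (t2)^↩ := t^↩ with its last 1 replaced by 0) and where t ≺ lim_n s_n iff t is a prefix of s_n for all sufficiently large n. Then e is Σ^0_2-measurable: for every open subset U of 2^ω, the preimage e^{-1}(U) is a countable union of closed subsets of the space T ∩ 3^ω (an F_σ set relative to T ∩ 3^ω). -/

import Mathlib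

open Set Classical

/-- The prefix of length `l` of an infinite word. -/
def wordPrefix {α : Type*} (x : ℕ → α) (l : ℕ) : List α := List.ofFn fun i : Fin l => x i.val

/-- `T ∩ 3^{<ω}`: finite words over `3 = {0,1,2}` all of whose prefixes contain at most as
many `2`s as `1`s. -/
def Tfin : Set (List (Fin 3)) :=
  { s | ∀ l : ℕ, (s.take l).count 2 ≤ (s.take l).count 1 }

/-- `T ∩ 3^ω`: infinite words over `3 = {0,1,2}` all of whose finite prefixes contain at
most as many `2`s as `1`s. -/
def Tinf : Set (ℕ → Fin 3) :=
  { α | ∀ l : ℕ, (wordPrefix α l).count 2 ≤ (wordPrefix α l).count 1 }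

/-- Replace the first occurrence of `1` (i.e. `true`) in a binary word by `0`. -/
def replaceFirstOne : List Bool → List Bool
  | [] => []
  | true :: t => false :: t
  | false :: t => false :: replaceFirstOne t

/-- Replace the last occurrence of `1` (i.e. `true`) in a binary word by `0`. -/
def replaceLastOne (l : List Bool) : List Bool := (replaceFirstOne l.reverse).reverse

/-- One step of the erasing operation: appending a letter `ε ∈ {0,1}` appends it to the
erased word, while appending the letter `2` replaces the last `1` of the erased word by `0`. -/
def eraseStep (acc : List Bool) (a : Fin 3) : List Bool :=
  if a = 2 then replaceLastOne acc else acc ++ [decide (a = 1)]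

/-- The erasing operation `s ↦ s^↩` on finite words over `3 = {0,1,2}` (letters `0`,`1` of
the binary output are encoded as `false`,`true`): `∅^↩ = ∅`, `(tε)^↩ = t^↩ε` for `ε ∈ {0,1}`,
and `(t2)^↩ = t^↩` with its last `1` replaced by `0`. -/
def eraseWord (s : List (Fin 3)) : List Bool := s.foldl eraseStep []

/-- `t` is a (finite) prefix of the infinite word `x`. -/
def InfPrefix {α : Type*} (t : List α) (x : ℕ → α) : Prop :=
  ∀ i : Fin t.length, t.get i = x i.val

/-- The infinite word `x` is the limit of the sequence of finite words `s`: a finite word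
is a prefix of `x` iff it is a prefix of `s m` for all sufficiently large `m`. -/
def IsLimitOf (x : ℕ → Bool) (s : ℕ → List Bool) : Prop :=
  ∀ t : List Bool, InfPrefix t x ↔ ∀ᶠ m in Filter.atTop, t <+: s m

/-- The erasure `e(α) := lim_n (α↾n)^↩` of an infinite word over `3 = {0,1,2}` (an arbitrary
value is returned if the limit does not exist; for `α ∈ T ∩ 3^ω` it always exists). -/
noncomputable def eMap (α : ℕ → Fin 3) : ℕ → Bool :=
  if h : ∃ x : ℕ → Bool, IsLimitOf x (fun m => eraseWord (wordPrefix α m)) then h.choose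
  else fun _ => false

/-!
A position of `(α↾m)^↩` that reads `0` keeps reading `0` as `m` grows, and for `α ∈ T` at most
half of the letters of `α↾m` are `2`, so `(α↾m)^↩` has length at least `m / 2`. Hence every
letter of `(α↾m)^↩` stabilises, and `t ≺ e(α)` iff `t ≼ (α↾m)^↩` for all large `m`. So `e⁻¹(U)`
is the countable union, over the cylinders `[t] ⊆ U` and `N ∈ ℕ`, of the sets
`{α | ∀ m ≥ N, t ≼ (α↾m)^↩}`, which are closed because `t ≼ (α↾m)^↩` depends only on `α↾m`.
-/

open Filter

section InfiniteWords

variable {β : Type*}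

lemma wordPrefix_succ (x : ℕ → β) (m : ℕ) :
    wordPrefix x (m + 1) = wordPrefix x m ++ [x m] := by
  rw [wordPrefix, List.ofFn_succ']
  simp [wordPrefix, List.concat_eq_append]

lemma infPrefix_wordPrefix_iff {x y : ℕ → β} {n : ℕ} :
    InfPrefix (wordPrefix x n) y ↔ ∀ i < n, y i = x i := by
  simp [InfPrefix, wordPrefix, Fin.forall_iff, eq_comm]

lemma IsOpen.exists_infPrefix_subset [TopologicalSpace β] {U : Set (ℕ → β)} (hU : IsOpen U)
    {x : ℕ → β} (hx : x ∈ U) : ∃ t : List β, InfPrefix t x ∧ {y | InfPrefix t y} ⊆ U := by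
  obtain ⟨I, u, hIu, hsub⟩ := isOpen_pi_iff.1 hU x hx
  refine ⟨wordPrefix x (I.sup id + 1), infPrefix_wordPrefix_iff.2 fun _ _ => rfl, fun y hy => ?_⟩
  refine hsub fun i hi => ?_
  rw [infPrefix_wordPrefix_iff.1 hy i (Nat.lt_succ_of_le (Finset.le_sup (f := id) hi))]
  exact (hIu i hi).2

lemma isClosed_setOf_wordPrefix [TopologicalSpace β] [DiscreteTopology β] (P : List β → Prop)
    (m : ℕ) : IsClosed {x : ℕ → β | P (wordPrefix x m)} := by
  have hrestrict : Continuous fun (x : ℕ → β) (i : Fin m) => x i :=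
    continuous_pi fun i => continuous_apply _
  exact (isClosed_discrete {g : Fin m → β | P (List.ofFn g)}).preimage hrestrict

end InfiniteWords

lemma isLimitOf_of_eventually_getElem? {x : ℕ → Bool} {s : ℕ → List Bool}
    (h : ∀ i, ∀ᶠ m in atTop, (s m)[i]? = some (x i)) : IsLimitOf x s := by
  intro t
  constructor
  · intro ht
    filter_upwards [eventually_all.2 fun i : Fin t.length => h i] with m hm
    refine List.prefix_iff_getElem?.2 fun i hi => ?_
    rw [hm ⟨i, hi⟩, ← ht ⟨i, hi⟩, List.get_eq_getElem]
  · intro ht i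
    obtain ⟨m, hxm, htm⟩ := ((h i).and ht).exists
    have := (List.prefix_iff_getElem?.1 htm i i.isLt).symm.trans hxm
    simpa using this

lemma exists_eventually_getElem?_of_false_stable {s : ℕ → List Bool}
    (hlen : Tendsto (fun m => (s m).length) atTop atTop)
    (hfalse : ∀ m (i : ℕ), (s m)[i]? = some false → (s (m + 1))[i]? = some false) :
    ∃ x : ℕ → Bool, ∀ i, ∀ᶠ m in atTop, (s m)[i]? = some (x i) := by
  refine ⟨fun i => decide (∀ m, (s m)[i]? ≠ some false), fun i => ?_⟩
  by_cases h : ∀ m, (s m)[i]? ≠ some false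
  · filter_upwards [hlen.eventually_gt_atTop i] with m hm
    rw [decide_eq_true h, List.getElem?_eq_getElem hm]
    simpa [List.getElem?_eq_getElem hm] using h m
  · obtain ⟨m₀, hm₀⟩ : ∃ m, (s m)[i]? = some false := by simpa using h
    filter_upwards [eventually_ge_atTop m₀] with m hm
    rw [decide_eq_false h]
    induction m, hm using Nat.le_induction with
    | base => exact hm₀
    | succ m _ ih => exact hfalse m i ih

lemma length_replaceFirstOne (l : List Bool) : (replaceFirstOne l).length = l.length := by
  induction l with
  | nil => rfl
  | cons b t ih => cases b <;> simp [replaceFirstOne, ih]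

lemma replaceFirstOne_getElem?_of_eq_false {l : List Bool} {i : ℕ} (h : l[i]? = some false) :
    (replaceFirstOne l)[i]? = some false := by
  induction l generalizing i with
  | nil => simp at h
  | cons b t ih =>
    cases i with
    | zero => cases b <;> simp_all [replaceFirstOne]
    | succ j => cases b <;> simp_all [replaceFirstOne]

lemma length_replaceLastOne (l : List Bool) : (replaceLastOne l).length = l.length := by
  simp [replaceLastOne, length_replaceFirstOne]

lemma replaceLastOne_getElem?_of_eq_false {l : List Bool} {i : ℕ} (h : l[i]? = some false) :
    (replaceLastOne l)[i]? = some false := by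
  have hi : i < l.length := (List.getElem?_eq_some_iff.1 h).1
  have hrev : l.reverse[l.length - 1 - i]? = some false := by
    rw [List.getElem?_reverse (by omega), show l.length - 1 - (l.length - 1 - i) = i by omega, h]
  have := replaceFirstOne_getElem?_of_eq_false hrev
  rw [replaceLastOne, List.getElem?_reverse (by simpa [length_replaceFirstOne] using hi)]
  simpa [length_replaceFirstOne] using this

lemma eraseStep_getElem?_of_eq_false {l : List Bool} {i : ℕ} (a : Fin 3)
    (h : l[i]? = some false) : (eraseStep l a)[i]? = some false := by
  unfold eraseStep
  split
  · exact replaceLastOne_getElem?_of_eq_false h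
  · rw [List.getElem?_append_left (List.getElem?_eq_some_iff.1 h).1, h]

lemma eraseWord_append_singleton (s : List (Fin 3)) (a : Fin 3) :
    eraseWord (s ++ [a]) = eraseStep (eraseWord s) a := by
  simp [eraseWord, List.foldl_append]

lemma length_eraseWord_add_count_two (s : List (Fin 3)) :
    (eraseWord s).length + s.count 2 = s.length := by
  induction s using List.reverseRecOn with
  | nil => rfl
  | append_singleton s a ih =>
    rw [eraseWord_append_singleton, eraseStep]
    split <;> simp_all [length_replaceLastOne] <;> omega

lemma count_one_add_count_two_le_length (s : List (Fin 3)) :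
    s.count 1 + s.count 2 ≤ s.length := by
  induction s with
  | nil => simp
  | cons a t ih => fin_cases a <;> simp <;> omega

lemma tendsto_length_eraseWord_wordPrefix {α : ℕ → Fin 3} (hα : α ∈ Tinf) :
    Tendsto (fun m => (eraseWord (wordPrefix α m)).length) atTop atTop := by
  refine tendsto_atTop_mono (f := fun m => m / 2) (fun m => ?_)
    (Nat.tendsto_div_const_atTop two_ne_zero)
  have hlen := length_eraseWord_add_count_two (wordPrefix α m)
  have hcount := count_one_add_count_two_le_length (wordPrefix α m)
  have hm : (wordPrefix α m).length = m := by simp [wordPrefix]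
  have := hα m
  omega

lemma infPrefix_eMap_iff {α : ℕ → Fin 3} (hα : α ∈ Tinf) (t : List Bool) :
    InfPrefix t (eMap α) ↔ ∀ᶠ m in atTop, t <+: eraseWord (wordPrefix α m) := by
  have hlim : ∃ x, IsLimitOf x fun m => eraseWord (wordPrefix α m) := by
    obtain ⟨x, hx⟩ := exists_eventually_getElem?_of_false_stable
      (tendsto_length_eraseWord_wordPrefix hα) fun m i h => by
        rw [wordPrefix_succ, eraseWord_append_singleton]
        exact eraseStep_getElem?_of_eq_false _ h
    exact ⟨x, isLimitOf_of_eventually_getElem? hx⟩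
  rw [eMap, dif_pos hlim]
  exact hlim.choose_spec t

/-- The map `e : T ∩ 3^ω → 2^ω`, `e(α) = lim_n (α↾n)^↩`, is `Σ⁰₂`-measurable: the preimage
of every open subset of `2^ω` is a countable union of closed subsets of the subspace
`T ∩ 3^ω` (i.e. an `F_σ` set relative to `T ∩ 3^ω`). -/
theorem eMap_sigma2_measurable (U : Set (ℕ → Bool)) (hU : IsOpen U) :
    ∃ F : ℕ → Set Tinf, (∀ n, IsClosed (F n)) ∧
      (fun α : Tinf => eMap α.val) ⁻¹' U = ⋃ n, F n := by
  let F : List Bool × ℕ → Set Tinf := fun p =>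
    {_α | {y | InfPrefix p.1 y} ⊆ U} ∩
      ⋂ m ≥ p.2, Subtype.val ⁻¹' {x | p.1 <+: eraseWord (wordPrefix x m)}
  have hF : ∀ p, IsClosed (F p) := fun p =>
    isClosed_const.inter <| isClosed_biInter fun m _ =>
      (isClosed_setOf_wordPrefix (fun w => p.1 <+: eraseWord w) m).preimage continuous_subtype_val
  have hpre : (fun α : Tinf => eMap α.val) ⁻¹' U = ⋃ p, F p := by
    ext α
    simp only [F, mem_preimage, mem_iUnion, mem_inter_iff, mem_ofPred_eq, mem_iInter]
    constructor
    · intro hα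
      obtain ⟨t, ht, htU⟩ := hU.exists_infPrefix_subset hα
      obtain ⟨N, hN⟩ := eventually_atTop.1 ((infPrefix_eMap_iff α.2 t).1 ht)
      exact ⟨(t, N), htU, hN⟩
    · rintro ⟨⟨t, N⟩, htU, hN⟩
      exact htU ((infPrefix_eMap_iff α.2 t).2 (eventually_atTop.2 ⟨N, hN⟩))
  obtain ⟨f, hf⟩ := exists_surjective_nat (List Bool × ℕ)
  exact ⟨F ∘ f, fun n => hF (f n), hpre.trans (hf.iUnion_comp F).symm⟩
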